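/- Let T be a plane binary tree with p ≥ 1 internal nodes, whose leaves are numbered 0, 1, …, p from left to right. Let SG(T, i) denote the tree obtained by splicing T at leaf i into a left part T₁ and a right part T₂ and grafting them as T₁ ∨ T₂, and let T* denote the tree obtained from T by removing the leftmost leaf and erasing its parent node. Then: (i) for every i with 1 ≤ i ≤ p, (SG(T, i))* = SG(T*, i-1); and (ii) (SG(T, 0))* = T. -/

import Mathlib

/-- A plane binary tree: either the empty tree `∅` (a single leaf attached to the root,
no internal nodes), or the graft `T₁ ∨ T₂` of two plane binary trees (joined at a new
internal node attached to a new root). -/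
inductive PBT : Type
  | empty : PBT
  | graft : PBT → PBT → PBT
deriving DecidableEq

namespace PBT

/-- The number of internal nodes of a plane binary tree. -/
def size : PBT → ℕ
  | empty => 0
  | graft l r => size l + size r + 1

/-- Splicing a plane binary tree `T` at its `i`-th leaf (leaves are numbered
`0, 1, …, size T` from left to right): following the path from leaf `i` to the root,
the edges weakly to the left form the first tree (with `i` internal nodes) and the edges
weakly to the right form the second tree (with `size T - i` internal nodes). -/
def splice : PBT → ℕ → PBT × PBT
  | empty, _ => (empty, empty)
  | graft l r, i =>
      if i ≤ size l then ((splice l i).1, graft (splice l i).2 r)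
      else (graft l (splice r (i - size l - 1)).1, (splice r (i - size l - 1)).2)

/-- `SG(T, i)`: splice `T` at leaf `i` into `(T₁, T₂)` and graft, giving `T₁ ∨ T₂`. -/
def SG (T : PBT) (i : ℕ) : PBT :=
  graft (splice T i).1 (splice T i).2

/-- `T*`: the tree obtained from `T` by removing the leftmost leaf and erasing its
parent internal node: `(∅ ∨ T₂)* = T₂` and `(T₁ ∨ T₂)* = T₁* ∨ T₂` for `T₁ ≠ ∅`. -/
def star : PBT → PBT
  | empty => empty
  | graft empty r => r
  | graft (graft a b) r => graft (star (graft a b)) r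

end PBT

/-!
Splicing `T*` at leaf `i` cuts along the same path as splicing `T` at leaf `i + 1`: the
right parts agree and the left part loses exactly the leftmost leaf, i.e. it is the `*` of
the left part for `T`. Grafting the two parts then gives (i); for (ii), splicing at leaf `0`
yields `(∅, T)` and `(∅ ∨ T)* = T`.
-/

namespace PBT

theorem size_eq_zero_iff {T : PBT} : T.size = 0 ↔ T = empty := by
  cases T <;> simp [size]

theorem star_graft_of_ne_empty {l : PBT} (hl : l ≠ empty) (r : PBT) :
    (graft l r).star = graft l.star r := by
  cases l with
  | empty => exact absurd rfl hl
  | graft => rfl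

theorem size_star_add_one {T : PBT} (hT : T ≠ empty) : T.star.size + 1 = T.size := by
  induction T with
  | empty => exact absurd rfl hT
  | graft l r ihl =>
    cases l with
    | empty => simp [star, size]
    | graft a b =>
      rw [star_graft_of_ne_empty (by simp)]
      have := ihl (by simp)
      simp only [size] at this ⊢
      omega

theorem splice_zero (T : PBT) : T.splice 0 = (empty, T) := by
  induction T with
  | empty => rfl
  | graft l r ihl => simp [splice, ihl]

theorem size_splice_fst {T : PBT} {i : ℕ} (hi : i ≤ T.size) : (T.splice i).1.size = i := by
  induction T generalizing i with
  | empty => simp_all [size, splice]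
  | graft l r ihl ihr =>
    simp only [size] at hi
    by_cases hil : i ≤ l.size
    · simp [splice, hil, ihl hil]
    · simp [splice, hil, size, ihr (show i - l.size - 1 ≤ r.size by omega)]
      omega

theorem splice_star {T : PBT} {i : ℕ} (hi : i < T.size) :
    T.star.splice i = ((T.splice (i + 1)).1.star, (T.splice (i + 1)).2) := by
  induction T generalizing i with
  | empty => simp [size] at hi
  | graft l r ihl =>
    by_cases hl : l = empty
    · subst hl
      simp [star, splice, size]
    have hsize := size_star_add_one hl
    rw [star_graft_of_ne_empty hl]
    by_cases hil : i + 1 ≤ l.size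
    · have hi' : i ≤ l.star.size := by omega
      simp only [splice, if_pos hi', if_pos hil, ihl (show i < l.size by omega)]
    · have hi' : ¬i ≤ l.star.size := by omega
      have hidx : i - l.star.size - 1 = i + 1 - l.size - 1 := by omega
      simp only [splice, if_neg hi', if_neg hil, hidx, star_graft_of_ne_empty hl]

theorem star_SG {T : PBT} {i : ℕ} (hi : i < T.size) :
    (T.SG (i + 1)).star = T.star.SG i := by
  have hfst : (T.splice (i + 1)).1 ≠ empty := by
    rw [Ne, ← size_eq_zero_iff, size_splice_fst hi]
    omega
  rw [SG, SG, star_graft_of_ne_empty hfst, splice_star hi]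

theorem star_SG_zero (T : PBT) : (T.SG 0).star = T := by
  rw [SG, splice_zero]
  rfl

end PBT

theorem stmt_10_general (T : PBT) (p : ℕ) (hp : T.size = p) :
    (∀ i : ℕ, 1 ≤ i → i ≤ p → (T.SG i).star = T.star.SG (i - 1)) ∧
    (T.SG 0).star = T := by
  refine ⟨fun i hi1 hip => ?_, PBT.star_SG_zero T⟩
  obtain ⟨j, rfl⟩ := Nat.exists_eq_add_of_le' hi1
  exact PBT.star_SG (by omega)

/-- Let `T` be a plane binary tree with `p ≥ 1` internal nodes.  Then
(i) for every `1 ≤ i ≤ p`, `(SG(T, i))* = SG(T*, i - 1)`; and (ii) `(SG(T, 0))* = T`. -/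
theorem stmt_10 (T : PBT) (p : ℕ) (hp : T.size = p) (hp1 : 1 ≤ p) :
    (∀ i : ℕ, 1 ≤ i → i ≤ p → (T.SG i).star = T.star.SG (i - 1)) ∧
    (T.SG 0).star = T :=
  stmt_10_general T p hp
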